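/- In type A_11 (triangulations of a 12-gon), there exists a collection of triangulations, one for each point of X'_{F_2}(11), whose cluster tori cover X'_{F_2}(11) but, for every field F with more than 2 elements, fail to cover X'_F(11). -/

import Mathlib

/-- The projective line over a field `F`. -/
abbrev P1 (F : Type*) [Field F] := Projectivization F (F × F)

/-- The point `[1:0]` of the projective line. -/
noncomputable def ptZero (F : Type*) [Field F] : P1 F :=
  Projectivization.mk F (1, 0) (fun h => one_ne_zero (congrArg Prod.fst h))

/-- The point `[0:1]` of the projective line. -/
noncomputable def ptInf (F : Type*) [Field F] : P1 F :=
  Projectivization.mk F (0, 1) (fun h => one_ne_zero (congrArg Prod.snd h))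

/-- The point `[1:1]` of the projective line. -/
noncomputable def ptOne (F : Type*) [Field F] : P1 F :=
  Projectivization.mk F (1, 1) (fun h => one_ne_zero (congrArg Prod.fst h))

/-- `p = (i, j)` is a diagonal of the convex `(m+1)`-gon with vertices `0, …, m`:
`i < j`, the two vertices are not consecutive, and `(0, m)` is excluded (it is a side). -/
def IsDiag (m : ℕ) (p : ℕ × ℕ) : Prop :=
  p.1 + 2 ≤ p.2 ∧ p.2 ≤ m ∧ ¬(p.1 = 0 ∧ p.2 = m)

instance (m : ℕ) (p : ℕ × ℕ) : Decidable (IsDiag m p) := by unfold IsDiag; infer_instance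

/-- The type of diagonals of the convex `(m+1)`-gon. -/
abbrev Diagonal (m : ℕ) := {p : ℕ × ℕ // IsDiag m p}

/-- Two diagonals cross in the interior of the polygon. -/
def Crossing {m : ℕ} (d e : Diagonal m) : Prop :=
  (d.val.1 < e.val.1 ∧ e.val.1 < d.val.2 ∧ d.val.2 < e.val.2) ∨
  (e.val.1 < d.val.1 ∧ d.val.1 < e.val.2 ∧ e.val.2 < d.val.2)

/-- A triangulation of the convex `(m+1)`-gon: a maximal set of pairwise
non-crossing diagonals (maximality = having `(m+1) - 3` diagonals). -/
structure Triangulation (m : ℕ) where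
  diags : Finset (Diagonal m)
  noncross : ∀ d ∈ diags, ∀ e ∈ diags, ¬ Crossing d e
  card_eq : diags.card = m - 2

/-- `y` takes distinct values on the endpoints of every diagonal of `T`
(i.e. `y` lies in the cluster torus of `T`). -/
def ProperDiags {F : Type*} [Field F] {m : ℕ} (T : Triangulation m) (y : ℕ → P1 F) : Prop :=
  ∀ d ∈ T.diags, y d.val.1 ≠ y d.val.2

/-- `c` is a proper coloring of the full graph of the triangulation `T`
(sides of the polygon together with the diagonals of `T`). -/
def ProperGraph {F : Type*} [Field F] {m : ℕ} (T : Triangulation m) (c : ℕ → P1 F) : Prop :=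
  (∀ i < m, c i ≠ c (i + 1)) ∧ c m ≠ c 0 ∧ ProperDiags T c

/-- `y` is a point of `X_F(m)`: `y 0 = [1:0]`, `y m = [0:1]`, consecutive entries distinct. -/
def XCond (F : Type*) [Field F] (m : ℕ) (y : ℕ → P1 F) : Prop :=
  y 0 = ptZero F ∧ y m = ptInf F ∧ ∀ i < m, y i ≠ y (i + 1)

/-- `y` is the alternating sequence `([1:0], [0:1], [1:0], …)` on `0, …, m`. -/
def IsAltSeq (F : Type*) [Field F] (m : ℕ) (y : ℕ → P1 F) : Prop :=
  ∀ i ≤ m, y i = if i % 2 = 0 then ptZero F else ptInf F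

/-- The diagonal `d` is valid for the point `y`: its endpoints have distinct labels and
on each of the two sub-polygons determined by `d` the labels take at least three values. -/
def ValidDiag (F : Type*) [Field F] (m : ℕ) (y : ℕ → P1 F) (d : Diagonal m) : Prop :=
  y d.val.1 ≠ y d.val.2 ∧
  3 ≤ (y '' (Set.Icc d.val.1 d.val.2)).ncard ∧
  3 ≤ (y '' (Set.Icc 0 d.val.1 ∪ Set.Icc d.val.2 m)).ncard

/-- `T'` is obtained from `T` by removing the diagonals `old` and adding the diagonals `new`. -/
def SwapMove {m : ℕ} (T T' : Triangulation m) (old new : Finset (Diagonal m)) : Prop :=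
  old ⊆ T.diags ∧ T'.diags = (T.diags \ old) ∪ new

/-- Zig-zag hexagonal move: inside a hexagonal sub-polygon with vertices
`v 0 < ⋯ < v 5`, replace the zig-zag `{15, 35, 36}` by the zig-zag `{24, 26, 46}`
(in the labels `1, …, 6` of the hexagon). -/
def ZigZagMoveOne {m : ℕ} (T T' : Triangulation m) : Prop :=
  ∃ v : Fin 6 → ℕ, StrictMono v ∧ v 5 ≤ m ∧
    ∃ (h1 : IsDiag m (v 0, v 4)) (h2 : IsDiag m (v 2, v 4)) (h3 : IsDiag m (v 2, v 5))
      (h4 : IsDiag m (v 1, v 3)) (h5 : IsDiag m (v 1, v 5)) (h6 : IsDiag m (v 3, v 5)),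
      SwapMove T T' {⟨(v 0, v 4), h1⟩, ⟨(v 2, v 4), h2⟩, ⟨(v 2, v 5), h3⟩}
        {⟨(v 1, v 3), h4⟩, ⟨(v 1, v 5), h5⟩, ⟨(v 3, v 5), h6⟩}

/-- Inscribed-triangle hexagonal move: inside a hexagonal sub-polygon with vertices
`v 0 < ⋯ < v 5`, replace the inscribed triangle `{13, 35, 51}` by `{24, 46, 62}`. -/
def InscribedMoveOne {m : ℕ} (T T' : Triangulation m) : Prop :=
  ∃ v : Fin 6 → ℕ, StrictMono v ∧ v 5 ≤ m ∧
    ∃ (h1 : IsDiag m (v 0, v 2)) (h2 : IsDiag m (v 2, v 4)) (h3 : IsDiag m (v 0, v 4))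
      (h4 : IsDiag m (v 1, v 3)) (h5 : IsDiag m (v 3, v 5)) (h6 : IsDiag m (v 1, v 5)),
      SwapMove T T' {⟨(v 0, v 2), h1⟩, ⟨(v 2, v 4), h2⟩, ⟨(v 0, v 4), h3⟩}
        {⟨(v 1, v 3), h4⟩, ⟨(v 3, v 5), h5⟩, ⟨(v 1, v 5), h6⟩}

/-- A hexagonal move (in either direction). -/
def HexMove {m : ℕ} (T T' : Triangulation m) : Prop :=
  ZigZagMoveOne T T' ∨ ZigZagMoveOne T' T ∨ InscribedMoveOne T T' ∨ InscribedMoveOne T' T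

/-!
Each value of the witness `y` occurs exactly three times, so `y` is constant on twelve diagonals
of the 12-gon; a triangulation containing one of them has a cluster torus missing `y`. Since
`P¹(F₂)` has only three points, a point of `X'_{F₂}(11)` is a walk of eleven steps on three
colours, and for each of these 682 walks a triangulation containing one of the twelve diagonals
and proper for the walk is found by greedy ear clipping; the kernel checks all of them.
-/

theorem P1.mk_ne_mk_of_mul_ne {F : Type*} [Field F] {a b c d : F} (hab : (a, b) ≠ 0)
    (hcd : (c, d) ≠ 0) (h : a * d ≠ b * c) :
    Projectivization.mk F (a, b) hab ≠ Projectivization.mk F (c, d) hcd := by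
  intro he
  obtain ⟨u, hu⟩ := (Projectivization.mk_eq_mk_iff _ _ _ _ _).1 he
  have h₁ : (u : F) * c = a := congrArg Prod.fst hu
  have h₂ : (u : F) * d = b := congrArg Prod.snd hu
  exact h (by rw [← h₁, ← h₂]; ring)

section Points

variable (F : Type*) [Field F]

theorem ptZero_ne_ptInf : ptZero F ≠ ptInf F := P1.mk_ne_mk_of_mul_ne _ _ (by simp)

theorem ptZero_ne_ptOne : ptZero F ≠ ptOne F := P1.mk_ne_mk_of_mul_ne _ _ (by simp)

theorem ptOne_ne_ptInf : ptOne F ≠ ptInf F := P1.mk_ne_mk_of_mul_ne _ _ (by simp)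

end Points

theorem P1.eq_ptZero_or_eq_ptOne_or_eq_ptInf (p : P1 (ZMod 2)) :
    p = ptZero (ZMod 2) ∨ p = ptOne (ZMod 2) ∨ p = ptInf (ZMod 2) := by
  induction p using Projectivization.ind with
  | h v hv =>
    obtain ⟨x, y⟩ := v
    fin_cases x <;> fin_cases y
    · exact absurd rfl hv
    · exact Or.inr (Or.inr rfl)
    · exact Or.inl rfl
    · exact Or.inr (Or.inl rfl)

open Classical in
noncomputable def P1.toFin3 (p : P1 (ZMod 2)) : Fin 3 :=
  if p = ptZero (ZMod 2) then 0 else if p = ptInf (ZMod 2) then 2 else 1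

theorem P1.leftInverse_toFin3 :
    Function.LeftInverse ![ptZero (ZMod 2), ptOne (ZMod 2), ptInf (ZMod 2)] P1.toFin3 := by
  intro p
  rcases P1.eq_ptZero_or_eq_ptOne_or_eq_ptInf p with rfl | rfl | rfl <;>
    simp [P1.toFin3, ptZero_ne_ptInf, ptZero_ne_ptOne, ptOne_ne_ptInf, Ne.symm]

theorem P1.toFin3_injective : Function.Injective P1.toFin3 :=
  P1.leftInverse_toFin3.injective

theorem P1.toFin3_ptZero : P1.toFin3 (ptZero (ZMod 2)) = 0 := by simp [P1.toFin3]

theorem P1.toFin3_ptInf : P1.toFin3 (ptInf (ZMod 2)) = 2 := by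
  simp [P1.toFin3, (ptZero_ne_ptInf _).symm]

def walks (k : ℕ) : ℕ → Fin k → List (List (Fin k))
  | 0, v => [[v]]
  | n + 1, v => ((List.finRange k).filter (· ≠ v)).flatMap fun w => (walks k n w).map (v :: ·)

theorem ofFn_mem_walks {k : ℕ} : ∀ {n : ℕ} (f : Fin (n + 1) → Fin k),
    (∀ i : Fin n, f i.castSucc ≠ f i.succ) → List.ofFn f ∈ walks k n (f 0)
  | 0, f, _ => by simp [walks]
  | n + 1, f, hf => by
    rw [List.ofFn_succ, walks, List.mem_flatMap]
    refine ⟨f (Fin.succ 0), ?_, List.mem_map.2 ⟨_, ofFn_mem_walks _ fun i => hf i.succ, rfl⟩⟩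
    simpa using (hf 0).symm

def CrossesPair (p q : ℕ × ℕ) : Prop := p.1 < q.1 ∧ q.1 < p.2 ∧ p.2 < q.2

instance (p q : ℕ × ℕ) : Decidable (CrossesPair p q) := by unfold CrossesPair; infer_instance

def IsTriangulationList (m : ℕ) (l : List (ℕ × ℕ)) : Prop :=
  l.length = m - 2 ∧ (∀ p ∈ l, IsDiag m p) ∧
    l.Pairwise fun p q => p ≠ q ∧ ¬ CrossesPair p q ∧ ¬ CrossesPair q p

instance (m : ℕ) (l : List (ℕ × ℕ)) : Decidable (IsTriangulationList m l) := by
  unfold IsTriangulationList; infer_instance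

namespace Triangulation

variable {m : ℕ}

def ofList (l : List (ℕ × ℕ)) (h : IsTriangulationList m l) : Triangulation m where
  diags := l.toFinset.subtype (IsDiag m)
  noncross d hd e he hde := by
    rw [Finset.mem_subtype, List.mem_toFinset] at hd he
    obtain ⟨-, -, hl⟩ := h
    have : Std.Symm fun p q : ℕ × ℕ => p ≠ q ∧ ¬ CrossesPair p q ∧ ¬ CrossesPair q p :=
      ⟨fun p q ⟨hpq, h₁, h₂⟩ => ⟨hpq.symm, h₂, h₁⟩⟩
    obtain rfl | hne := eq_or_ne d e
    · rcases hde with ⟨h₁, -, -⟩ | ⟨h₁, -, -⟩ <;> exact lt_irrefl _ h₁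
    · obtain ⟨-, h₁, h₂⟩ := hl.forall hd he (Subtype.val_injective.ne hne)
      exact hde.elim h₁ h₂
  card_eq := by
    obtain ⟨hlen, hdiag, hl⟩ := h
    rw [Finset.card_subtype, Finset.filter_true_of_mem fun p hp => hdiag p (List.mem_toFinset.1 hp),
      List.toFinset_card_of_nodup (hl.imp (·.1)), hlen]

theorem mem_ofList {l : List (ℕ × ℕ)} {h : IsTriangulationList m l} {d : Diagonal m} :
    d ∈ (ofList l h).diags ↔ d.val ∈ l := by
  simp [ofList]

def fan (m : ℕ) : Triangulation m :=
  ofList ((List.range' 2 (m - 2)).map (0, ·)) <| by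
    refine ⟨by simp, ?_, ?_⟩
    · simp only [List.mem_map, List.mem_range']
      rintro _ ⟨k, ⟨i, hi, rfl⟩, rfl⟩
      refine ⟨?_, ?_, ?_⟩ <;> dsimp only <;> omega
    · refine List.pairwise_map.2 ((List.nodup_range' ..).imp fun hne => ?_)
      simp [CrossesPair, hne]

end Triangulation

namespace EarClipping

variable (s : List (Fin 3))

def IsThreeColored (vs : List ℕ) : Prop := ∀ c : Fin 3, ∃ v ∈ vs, s.getD v 0 = c

instance (vs : List ℕ) : Decidable (IsThreeColored s vs) := by
  unfold IsThreeColored; infer_instance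

/-- The triples `(vs[i-1], vs[i], vs[i+1])` of the polygon with cyclic vertex list `vs`. -/
def ears (vs : List ℕ) : List (ℕ × ℕ × ℕ) :=
  List.zip (vs.getLastD 0 :: vs) (List.zip vs (vs.tail ++ vs.take 1))

def earClip : ℕ → List ℕ → Option (List (ℕ × ℕ))
  | 0, _ => none
  | n + 1, vs =>
    if vs.length ≤ 3 then some [] else
    match (ears vs).find? fun (a, b, c) =>
        decide (s.getD a 0 ≠ s.getD c 0) && decide (IsThreeColored s (vs.erase b)) with
    | some (a, b, c) => (earClip n (vs.erase b)).map ((min a c, max a c) :: ·)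
    | none => none

/-- Only a search: its output is verified by `certificate_spec`, never proved correct. -/
def certificate (m : ℕ) (candidates : List (ℕ × ℕ)) : Option (List (ℕ × ℕ)) :=
  candidates.findSome? fun (i, j) =>
    if s.getD i 0 = s.getD j 0 then none else do
      let inner ← earClip s (m + 1) (List.range' i (j + 1 - i))
      let outer ← earClip s (m + 1) (List.range' j (m + 1 - j) ++ List.range (i + 1))
      pure ((i, j) :: inner ++ outer)

end EarClipping

def diagonalsWithEqualEnds {α : Type*} [DecidableEq α] (m : ℕ) (f : ℕ → α) : List (ℕ × ℕ) :=
  ((List.range (m + 1)).product (List.range (m + 1))).filter fun p =>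
    decide (IsDiag m p) && decide (f p.1 = f p.2)

/-- The witness `y` is `witnessPoint c ∘ witnessPattern`, with `a = [1:1]` and `b = [c:1]`. -/
def witnessPattern (i : ℕ) : Fin 4 := [0, 1, 2, 1, 3, 0, 2, 3, 1, 0, 3, 2].getD i 0

def altColors : List (Fin 3) := (List.range 12).map fun i => if i % 2 = 0 then 0 else 2

theorem certificate_spec : ∀ s ∈ walks 3 11 0, s.getD 11 0 = 2 → s ≠ altColors →
    ∃ l ∈ (EarClipping.certificate s 11 (diagonalsWithEqualEnds 11 witnessPattern)).toList,
      IsTriangulationList 11 l ∧ (∃ p ∈ l, witnessPattern p.1 = witnessPattern p.2) ∧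
        ∀ p ∈ l, s.getD p.1 0 ≠ s.getD p.2 0 := by
  decide +kernel

section Witness

variable {F : Type*} [Field F]

noncomputable def witnessPoint (c : F) : Fin 4 → P1 F :=
  ![ptZero F, ptOne F, ptInf F, Projectivization.mk F (c, 1) fun h => one_ne_zero (congrArg Prod.snd h)]

theorem witnessPoint_injective {c : F} (hc0 : c ≠ 0) (hc1 : c ≠ 1) :
    Function.Injective (witnessPoint c) := by
  have h03 : ptZero F ≠ witnessPoint c 3 := P1.mk_ne_mk_of_mul_ne _ _ (by simp)
  have h13 : ptOne F ≠ witnessPoint c 3 := P1.mk_ne_mk_of_mul_ne _ _ (by simpa using hc1.symm)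
  have h23 : ptInf F ≠ witnessPoint c 3 := P1.mk_ne_mk_of_mul_ne _ _ (by simpa using hc0.symm)
  have := ptZero_ne_ptInf F
  have := ptZero_ne_ptOne F
  have := ptOne_ne_ptInf F
  intro i j h
  fin_cases i <;> fin_cases j <;> simp_all [witnessPoint, eq_comm]

noncomputable def witness (c : F) (i : ℕ) : P1 F := witnessPoint c (witnessPattern i)

theorem witness_xCond {c : F} (hc0 : c ≠ 0) (hc1 : c ≠ 1) : XCond F 11 (witness c) := by
  have hpattern : ∀ i < 11, witnessPattern i ≠ witnessPattern (i + 1) := by decide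
  exact ⟨rfl, rfl, fun i hi => (witnessPoint_injective hc0 hc1).ne (hpattern i hi)⟩

theorem witness_not_isAltSeq (c : F) : ¬ IsAltSeq F 11 (witness c) :=
  fun h => ptOne_ne_ptInf F (h 1 (by norm_num))

end Witness

section Cover

variable {z : ℕ → P1 (ZMod 2)}

noncomputable def colors (z : ℕ → P1 (ZMod 2)) : List (Fin 3) :=
  List.ofFn fun i : Fin 12 => P1.toFin3 (z i)

theorem getD_colors {i : ℕ} (hi : i ≤ 11) : (colors z).getD i 0 = P1.toFin3 (z i) := by
  rw [colors, List.getD_eq_getElem _ _ (by simp; omega), List.getElem_ofFn]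

theorem colors_mem_walks (hz : XCond (ZMod 2) 11 z) : colors z ∈ walks 3 11 0 := by
  have h := ofFn_mem_walks (fun i : Fin 12 => P1.toFin3 (z i)) fun i =>
    P1.toFin3_injective.ne (hz.2.2 i i.isLt)
  rwa [Fin.val_zero, hz.1, P1.toFin3_ptZero] at h

theorem colors_ne_altColors (hz : ¬ IsAltSeq (ZMod 2) 11 z) : colors z ≠ altColors := by
  refine fun h => hz fun i hi => ?_
  rw [← P1.leftInverse_toFin3 (z i), ← getD_colors hi, h]
  rw [altColors, List.getD_eq_getElem _ _ (by simp; omega), List.getElem_map, List.getElem_range]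
  split_ifs <;> rfl

theorem exists_triangulation_properDiags (hz : XCond (ZMod 2) 11 z)
    (hnz : ¬ IsAltSeq (ZMod 2) 11 z) :
    ∃ T : Triangulation 11, (∃ d ∈ T.diags, witnessPattern d.val.1 = witnessPattern d.val.2) ∧
      ProperDiags T z := by
  have h11 : (colors z).getD 11 0 = 2 := by rw [getD_colors le_rfl, hz.2.1, P1.toFin3_ptInf]
  obtain ⟨l, -, htri, ⟨p, hp, hmono⟩, hproper⟩ :=
    certificate_spec _ (colors_mem_walks hz) h11 (colors_ne_altColors hnz)
  refine ⟨Triangulation.ofList l htri, ⟨⟨p, htri.2.1 p hp⟩, Triangulation.mem_ofList.2 hp, hmono⟩,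
    fun d hd heq => ?_⟩
  obtain ⟨h₁, h₂, -⟩ := d.2
  have := hproper d.val (Triangulation.mem_ofList.1 hd)
  rw [getD_colors (by omega), getD_colors h₂, heq] at this
  exact this rfl

end Cover

universe u in
theorem stmt18 :
    ∃ Tz : (ℕ → P1 (ZMod 2)) → Triangulation 11,
      (∀ z, XCond (ZMod 2) 11 z → ¬ IsAltSeq (ZMod 2) 11 z → ProperDiags (Tz z) z) ∧
      ∀ (F : Type u) [Field F], (∃ c : F, c ≠ 0 ∧ c ≠ 1) →
        ∃ y : ℕ → P1 F, (XCond F 11 y ∧ ¬ IsAltSeq F 11 y) ∧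
          ∀ z, XCond (ZMod 2) 11 z → ¬ IsAltSeq (ZMod 2) 11 z →
            ¬ ProperDiags (Tz z) y := by
  have hcover : ∀ z, ∃ T : Triangulation 11, XCond (ZMod 2) 11 z → ¬ IsAltSeq (ZMod 2) 11 z →
      (∃ d ∈ T.diags, witnessPattern d.val.1 = witnessPattern d.val.2) ∧ ProperDiags T z := by
    intro z
    by_cases hz : XCond (ZMod 2) 11 z ∧ ¬ IsAltSeq (ZMod 2) 11 z
    · obtain ⟨T, hT⟩ := exists_triangulation_properDiags hz.1 hz.2
      exact ⟨T, fun _ _ => hT⟩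
    · exact ⟨Triangulation.fan 11, fun h h' => absurd ⟨h, h'⟩ hz⟩
  choose Tz hTz using hcover
  refine ⟨Tz, fun z hz hnz => (hTz z hz hnz).2, fun F _ ⟨c, hc0, hc1⟩ =>
    ⟨witness c, ⟨witness_xCond hc0 hc1, witness_not_isAltSeq c⟩, fun z hz hnz hproper => ?_⟩⟩
  obtain ⟨d, hd, hmono⟩ := (hTz z hz hnz).1
  exact hproper d hd (congrArg (witnessPoint c) hmono)
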